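/- If x is a vertex of a finite connected simple graph G, then gp(G − x) ≤ 2 · gp(G), where G − x is the subgraph of G induced by V(G) ∖ {x}. -/

import Mathlib

open SimpleGraph

variable {V : Type*}

/-- `S` is a general position set of `G`: no three pairwise distinct vertices of `S`
(lying in a common component) lie on a common shortest path, i.e. no `v ∈ S` lies
strictly between `u, w ∈ S`. -/
def IsGPSet (G : SimpleGraph V) (S : Set V) : Prop :=
  ∀ u ∈ S, ∀ v ∈ S, ∀ w ∈ S, u ≠ v → v ≠ w → u ≠ w →
    ¬(G.Reachable u w ∧ G.dist u v + G.dist v w = G.dist u w)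

/-- The general position number of `G`. -/
noncomputable def gpNum (G : SimpleGraph V) [Fintype V] : ℕ :=
  sSup {n | ∃ S : Finset V, IsGPSet G ↑S ∧ S.card = n}

/-- The vertex-deleted subgraph `G - x`, induced on the vertices distinct from `x`. -/
def deleteVertex (G : SimpleGraph V) (x : V) : SimpleGraph {v : V // v ≠ x} :=
  G.comap Subtype.val


/-
Let `S` be a general position set of `G - x`, and call `v ∈ S` shadowed if it lies on a shortest
path from `x` to another vertex of `S`. A pair of vertices with no shortest path of `G` through
`x` has the same distance in `G - x` as in `G`. Hence, if `u, v, w ∈ S` lie in this order on a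
shortest path of `G`, some shortest path of `G` between consecutive ones passes through `x`,
which places `v` on a shortest path from `x` to `u` or to `w`. So no unshadowed vertex is the
middle one of such a triple, and the unshadowed vertices form a general position set of `G`.
Neither can a vertex lie between `x` and a shadowed `w ∈ S`, for it would lie on one shortest
path of `G - x` with `w` and the vertex shadowing `w`; so the shadowed vertices form a general
position set of `G` as well, and `|S| ≤ 2 gp(G)`.
-/

namespace SimpleGraph

variable {W : Type*} {G : SimpleGraph V} {G' : SimpleGraph W} {u v w : V}

lemma Reachable.dist_map_le (f : G →g G') (h : G.Reachable u v) :
    G'.dist (f u) (f v) ≤ G.dist u v := by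
  obtain ⟨p, hp⟩ := h.exists_walk_length_eq_dist
  rw [← hp, ← Walk.length_map f]
  exact dist_le _

lemma Walk.dist_add_dist_le_length (p : G.Walk u v) (hw : w ∈ p.support) :
    G.dist u w + G.dist w v ≤ p.length := by
  obtain ⟨q, r, rfl⟩ := Walk.mem_support_iff_exists_append.mp hw
  rw [Walk.length_append]
  exact add_le_add (dist_le q) (dist_le r)

lemma Walk.length_induce {s : Set V} (p : G.Walk u v) (hp : ∀ w ∈ p.support, w ∈ s) :
    (p.induce s hp).length = p.length := by
  have := congrArg Walk.length (p.map_induce hp)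
  rwa [Walk.length_map] at this

end SimpleGraph

section GeneralPosition

variable {G : SimpleGraph V}

lemma isGPSet_image_val {p : V → Prop} {T : Set (Subtype p)}
    (h : ∀ u ∈ T, ∀ v ∈ T, ∀ w ∈ T, u ≠ v → v ≠ w → u ≠ w →
      G.dist u v + G.dist v w ≠ G.dist u w) :
    IsGPSet G (Subtype.val '' T) := by
  rintro _ ⟨u, hu, rfl⟩ _ ⟨v, hv, rfl⟩ _ ⟨w, hw, rfl⟩ huv hvw huw ⟨-, hcol⟩
  exact h u hu v hv w hw (ne_of_apply_ne _ huv) (ne_of_apply_ne _ hvw) (ne_of_apply_ne _ huw) hcol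

lemma card_le_gpNum [Fintype V] {S : Finset V} (hS : IsGPSet G S) : S.card ≤ gpNum G :=
  le_csSup ⟨Fintype.card V, fun _ ⟨T, _, hT⟩ => hT ▸ T.card_le_univ⟩ ⟨S, hS, rfl⟩

lemma gpNum_le [Fintype V] {n : ℕ} (h : ∀ S : Finset V, IsGPSet G S → S.card ≤ n) :
    gpNum G ≤ n :=
  csSup_le' fun _ ⟨S, hS, hn⟩ => hn ▸ h S hS

lemma card_le_gpNum_of_isGPSet_image_val [Fintype V] {p : V → Prop} {T : Finset (Subtype p)}
    (hT : IsGPSet G (Subtype.val '' (T : Set (Subtype p)))) : T.card ≤ gpNum G := by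
  simpa using card_le_gpNum (S := T.map (Function.Embedding.subtype p)) (by simpa using hT)

end GeneralPosition

section DeleteVertex

variable {G : SimpleGraph V} {x : V}

lemma dist_le_dist_deleteVertex {u v : {v : V // v ≠ x}} (h : (deleteVertex G x).Reachable u v) :
    G.dist u v ≤ (deleteVertex G x).dist u v :=
  h.dist_map_le ⟨Subtype.val, id⟩

lemma reachable_deleteVertex_and_dist_eq (hG : G.Connected) {u v : {v : V // v ≠ x}}
    (h : G.dist u v < G.dist u x + G.dist x v) :
    (deleteVertex G x).Reachable u v ∧ (deleteVertex G x).dist u v = G.dist u v := by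
  obtain ⟨p, hp⟩ := hG.exists_walk_length_eq_dist u v
  have hx : ∀ w ∈ p.support, w ∈ {w | w ≠ x} := by
    rintro w hw rfl
    have := p.dist_add_dist_le_length hw
    omega
  let q : (deleteVertex G x).Walk u v := p.induce {w | w ≠ x} hx
  refine ⟨q.reachable, le_antisymm ?_ (dist_le_dist_deleteVertex q.reachable)⟩
  calc (deleteVertex G x).dist u v ≤ q.length := dist_le q
    _ = G.dist u v := (p.length_induce hx).trans hp

lemma collinear_deleteVertex (hG : G.Connected) {u v w : {v : V // v ≠ x}}
    (huv : G.dist u v < G.dist u x + G.dist x v) (hvw : G.dist v w < G.dist v x + G.dist x w)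
    (h : G.dist u v + G.dist v w = G.dist u w) :
    (deleteVertex G x).Reachable u w ∧
      (deleteVertex G x).dist u v + (deleteVertex G x).dist v w =
        (deleteVertex G x).dist u w := by
  obtain ⟨ruv, duv⟩ := reachable_deleteVertex_and_dist_eq hG huv
  obtain ⟨rvw, dvw⟩ := reachable_deleteVertex_and_dist_eq hG hvw
  have ruw := ruv.trans rvw
  refine ⟨ruw, le_antisymm ?_ (ruv.dist_triangle_left w)⟩
  calc _ = G.dist u w := by rw [duv, dvw, h]
    _ ≤ _ := dist_le_dist_deleteVertex ruw

def IsShadowed (G : SimpleGraph V) (x : V) (S : Set {v : V // v ≠ x}) (v : {v : V // v ≠ x}) :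
    Prop :=
  ∃ u ∈ S, u ≠ v ∧ G.dist x u = G.dist x v + G.dist v u

variable {S : Set {v : V // v ≠ x}} {u v w : {v : V // v ≠ x}}

lemma IsGPSet.dist_add_dist_ne_of_deleteVertex (hS : IsGPSet (deleteVertex G x) S)
    (hG : G.Connected) (hu : u ∈ S) (hv : v ∈ S) (hw : w ∈ S) (huv : u ≠ v) (hvw : v ≠ w)
    (huw : u ≠ w) (h₁ : G.dist u v < G.dist u x + G.dist x v)
    (h₂ : G.dist v w < G.dist v x + G.dist x w) :
    G.dist u v + G.dist v w ≠ G.dist u w := fun h =>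
  hS u hu v hv w hw huv hvw huw (collinear_deleteVertex hG h₁ h₂ h)

lemma IsGPSet.between_of_collinear (hS : IsGPSet (deleteVertex G x) S) (hG : G.Connected)
    (hu : u ∈ S) (hv : v ∈ S) (hw : w ∈ S) (huv : u ≠ v) (hvw : v ≠ w) (huw : u ≠ w)
    (h : G.dist u v + G.dist v w = G.dist u w) :
    G.dist x u = G.dist x v + G.dist v u ∨ G.dist x w = G.dist x v + G.dist v w := by
  have t₁ : G.dist u w ≤ G.dist u x + G.dist x w := hG.dist_triangle
  have t₂ : G.dist x u ≤ G.dist x v + G.dist v u := hG.dist_triangle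
  have t₃ : G.dist x w ≤ G.dist x v + G.dist v w := hG.dist_triangle
  have c₁ : G.dist u x = G.dist x u := dist_comm
  have c₂ : G.dist v x = G.dist x v := dist_comm
  have c₃ : G.dist v u = G.dist u v := dist_comm
  -- a shortest `u,v`-path through `x` puts `v` between `x` and `w`, and symmetrically
  by_contra! hne
  exact hS.dist_add_dist_ne_of_deleteVertex hG hu hv hw huv hvw huw (by omega) (by omega) h

lemma IsGPSet.not_isShadowed_of_between (hS : IsGPSet (deleteVertex G x) S) (hG : G.Connected)
    (hv : v ∈ S) (hw : w ∈ S) (hvw : v ≠ w) (h : G.dist x w = G.dist x v + G.dist v w) :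
    ¬IsShadowed G x S w := by
  rintro ⟨z, hz, hzw, hwz⟩
  have pv : 0 < G.dist x v := hG.pos_dist_of_ne (Ne.symm v.prop)
  have pw : 0 < G.dist x w := hG.pos_dist_of_ne (Ne.symm w.prop)
  have pvw : 0 < G.dist v w := hG.pos_dist_of_ne (Subtype.val_injective.ne hvw)
  have t₁ : G.dist x z ≤ G.dist x v + G.dist v z := hG.dist_triangle
  have t₂ : G.dist v z ≤ G.dist v w + G.dist w z := hG.dist_triangle
  have c₁ : G.dist v x = G.dist x v := dist_comm
  have c₂ : G.dist w x = G.dist x w := dist_comm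
  have c₃ : G.dist w v = G.dist v w := dist_comm
  have hvz : v ≠ z := by
    rintro rfl
    omega
  -- `x, v, w, z` lie in this order on a shortest path of `G`
  exact hS.dist_add_dist_ne_of_deleteVertex hG hv hw hz hvw hzw.symm hvz (by omega) (by omega)
    (by omega)

lemma IsGPSet.isGPSet_image_not_isShadowed (hS : IsGPSet (deleteVertex G x) S)
    (hG : G.Connected) : IsGPSet G (Subtype.val '' {v ∈ S | ¬IsShadowed G x S v}) :=
  isGPSet_image_val fun u ⟨hu, _⟩ _ ⟨hv, hsv⟩ w ⟨hw, _⟩ huv hvw huw h =>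
    hsv <| (hS.between_of_collinear hG hu hv hw huv hvw huw h).elim
      (fun hb => ⟨u, hu, huv, hb⟩) (fun hb => ⟨w, hw, hvw.symm, hb⟩)

lemma IsGPSet.isGPSet_image_isShadowed (hS : IsGPSet (deleteVertex G x) S)
    (hG : G.Connected) : IsGPSet G (Subtype.val '' {v ∈ S | IsShadowed G x S v}) :=
  isGPSet_image_val fun _ ⟨hu, hsu⟩ _ ⟨hv, _⟩ _ ⟨hw, hsw⟩ huv hvw huw h =>
    (hS.between_of_collinear hG hu hv hw huv hvw huw h).elim
      (fun hb => hS.not_isShadowed_of_between hG hv hu huv.symm hb hsu)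
      (fun hb => hS.not_isShadowed_of_between hG hv hw hvw hb hsw)

end DeleteVertex

theorem gp_deleteVertex_le [Fintype V] [DecidableEq V] (G : SimpleGraph V)
    (hG : G.Connected) (x : V) :
    gpNum (deleteVertex G x) ≤ 2 * gpNum G := by
  refine gpNum_le fun S hS => ?_
  classical
  have h₁ := card_le_gpNum_of_isGPSet_image_val (T := S.filter (IsShadowed G x S))
    (by simpa using hS.isGPSet_image_isShadowed hG)
  have h₂ := card_le_gpNum_of_isGPSet_image_val (T := S.filter (¬IsShadowed G x S ·))
    (by simpa using hS.isGPSet_image_not_isShadowed hG)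
  calc S.card = (S.filter (IsShadowed G x S)).card + (S.filter (¬IsShadowed G x S ·)).card :=
        (S.card_filter_add_card_filter_not _).symm
    _ ≤ 2 * gpNum G := by omega
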